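/- Let (ℛ, l) be a planar resonant set with quadratic growth: there is M > 0 with #{θ ∈ ℛ : l(θ) < R} < M·R² for all R > 0. Let ψ : ℝ₊ → ℝ₊ be a decreasing approximation function and f a dimension function such that l ↦ l·f(ψ(l)) is decreasing. If the series Σ_{n≥1} n·f(ψ(n)) converges, then the Hausdorff f-measure of the well-approximable set W(ℛ, ψ) is zero. -/

import Mathlib

open MeasureTheory Real

open Filter Set Topology
open scoped ENNReal

/-! For each `K`, the limsup set is covered by the balls around the `θ` with `l θ > 2 ^ K`. Grouping
these centres into dyadic shells `2 ^ k ≤ l θ < 2 ^ (k + 1)`, quadratic growth bounds the `k`-th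
shell by `M 4 ^ (k + 1)` centres, each contributing at most `f (ψ (2 ^ k))`, so the `f`-cost of the
cover is at most twice a tail of `∑ₖ 4 M 4 ^ k f (ψ (2 ^ k))`. Since `t f (ψ t)` decreases, Cauchy
condensation makes this series converge together with `∑ₙ n f (ψ n)`, so the tails tend to `0`. -/

theorem MeasureTheory.Measure.mkMetric_le_liminf_two_mul_tsum_ball (f : ℝ → ℝ) (s : Set ℝ)
    (S : ℕ → Set ℝ) [∀ K, Countable (S K)] (r : ℝ → ℝ) (ρ : ℕ → ℝ≥0∞)
    (hρ : Tendsto ρ atTop (𝓝 0)) (hr₀ : ∀ K, ∀ θ ∈ S K, 0 ≤ r θ)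
    (hr : ∀ K, ∀ θ ∈ S K, ENNReal.ofReal (r θ) ≤ ρ K)
    (hs : ∀ K, s ⊆ ⋃ θ ∈ S K, Metric.ball θ (r θ)) :
    Measure.mkMetric (fun d => ENNReal.ofReal (f d.toReal)) s ≤
      liminf (fun K => 2 * ∑' θ : S K, ENNReal.ofReal (f (r θ))) atTop := by
  -- Each ball is split into two half-open halves of diameter `r θ`, so that no doubling
  -- property of `f` is needed.
  let half : ℝ → Bool → Set ℝ := fun θ b => cond b (Ioc (θ - r θ) θ) (Ico θ (θ + r θ))
  have hdiam : ∀ θ b, Metric.ediam (half θ b) = ENNReal.ofReal (r θ) := by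
    intro θ b
    cases b <;> simp [half, Real.ediam_Ico, Real.ediam_Ioc]
  have hcover : ∀ K, s ⊆ ⋃ p : S K × Bool, half p.1 p.2 := by
    intro K x hx
    obtain ⟨θ, hθ, hxθ⟩ := mem_iUnion₂.1 (hs K hx)
    rw [Real.ball_eq_Ioo] at hxθ
    rcases le_total x θ with hle | hle
    · exact mem_iUnion.2 ⟨(⟨θ, hθ⟩, true), hxθ.1, hle⟩
    · exact mem_iUnion.2 ⟨(⟨θ, hθ⟩, false), hle, hxθ.2⟩
  have hsum : ∀ K, ∑' p : S K × Bool, ENNReal.ofReal (f (Metric.ediam (half p.1 p.2)).toReal)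
      = 2 * ∑' θ : S K, ENNReal.ofReal (f (r θ)) := by
    intro K
    simp only [hdiam, ENNReal.tsum_prod', tsum_bool, ← two_mul, ENNReal.tsum_mul_left]
    congr 1
    exact tsum_congr fun θ => by rw [ENNReal.toReal_ofReal (hr₀ K θ θ.2)]
  simpa only [hsum] using Measure.mkMetric_le_liminf_tsum s ρ hρ
    (fun K (p : S K × Bool) => half p.1 p.2)
    (Eventually.of_forall fun K p => (hdiam _ _).trans_le (hr K _ p.1.2))
    (Eventually.of_forall hcover) (fun d => ENNReal.ofReal (f d.toReal))

section Condensation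

variable {u : ℝ → ℝ}

theorem summable_condensed_of_antitoneOn (hu : ∀ t > 0, 0 ≤ u t)
    (hmono : AntitoneOn (fun t => t * u t) (Ioi 0)) (h : Summable fun n : ℕ => (n : ℝ) * u n) :
    Summable fun k : ℕ => (2 : ℝ) ^ k * (2 ^ k * u (2 ^ k)) := by
  have := (summable_condensed_iff_of_nonneg (f := fun n : ℕ => (n : ℝ) * u n)
    (fun n => ?_) fun m n hm hmn => ?_).2 h
  · simpa using this
  · rcases n.eq_zero_or_pos with rfl | hn
    · simp
    · exact mul_nonneg n.cast_nonneg (hu _ (Nat.cast_pos.2 hn))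
  · exact hmono (mem_Ioi.2 (Nat.cast_pos.2 hm)) (mem_Ioi.2 (Nat.cast_pos.2 (hm.trans_le hmn)))
      (Nat.cast_le.2 hmn)

theorem tendsto_apply_two_pow_of_summable_condensed (hu : ∀ t > 0, 0 ≤ u t)
    (h : Summable fun k : ℕ => (2 : ℝ) ^ k * (2 ^ k * u (2 ^ k))) :
    Tendsto (fun k : ℕ => u (2 ^ k)) atTop (𝓝 0) := by
  refine squeeze_zero (fun k => hu _ (by positivity)) (fun k => ?_) h.tendsto_atTop_zero
  have h1 : (1 : ℝ) ≤ 2 ^ k := one_le_pow₀ one_le_two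
  have h0 := hu (2 ^ k) (by positivity)
  exact (le_mul_of_one_le_left h0 h1).trans (le_mul_of_one_le_left (by positivity) h1)

theorem tsum_ofReal_mul_ofReal_ne_top_of_summable_condensed (hu : ∀ t > 0, 0 ≤ u t) (M : ℝ)
    (h : Summable fun k : ℕ => (2 : ℝ) ^ k * (2 ^ k * u (2 ^ k))) :
    ∑' k : ℕ, ENNReal.ofReal (M * (2 ^ (k + 1)) ^ 2) * ENNReal.ofReal (u (2 ^ k)) ≠ ∞ := by
  refine ne_of_eq_of_ne (tsum_congr fun k => ?_) (h.mul_left (4 * M)).tsum_ofReal_ne_top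
  rw [← ENNReal.ofReal_mul' (hu _ (by positivity))]
  congr 1
  ring

end Condensation

theorem Monotone.tendsto_zero_of_tendsto_comp_zero {ι : Type*} {F : Filter ι} {f : ℝ → ℝ}
    (hf : Monotone f) (hfpos : ∀ r > 0, 0 < f r) {u : ι → ℝ} (hu : ∀ i, 0 ≤ u i)
    (h : Tendsto (fun i => f (u i)) F (𝓝 0)) : Tendsto u F (𝓝 0) :=
  tendsto_order.2 ⟨fun _ ha => Eventually.of_forall fun i => ha.trans_le (hu i),
    fun a ha => (h.eventually (gt_mem_nhds (hfpos a ha))).mono fun _ hi =>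
      lt_of_not_ge fun hai => (hf hai).not_gt hi⟩

section Shells

variable {R : Set ℝ} {l : ℝ → ℝ}

def dyadicShell (R : Set ℝ) (l : ℝ → ℝ) (k : ℕ) : Set ℝ :=
  {θ ∈ R | 2 ^ k ≤ l θ ∧ l θ < 2 ^ (k + 1)}

theorem dyadicShell_subset (k : ℕ) : dyadicShell R l k ⊆ {θ ∈ R | l θ < 2 ^ (k + 1)} :=
  fun _ hθ => ⟨hθ.1, hθ.2.2⟩

theorem setOf_pow_lt_subset_iUnion_dyadicShell (K : ℕ) :
    {θ ∈ R | 2 ^ K < l θ} ⊆ ⋃ j, dyadicShell R l (j + K) := by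
  rintro θ ⟨hθ, hKθ⟩
  obtain ⟨n, hn, hn'⟩ := exists_nat_pow_near (one_le_pow₀ one_le_two |>.trans hKθ.le) one_lt_two
  have hKn : K ≤ n := Nat.lt_succ_iff.1 <| (pow_lt_pow_iff_right₀ one_lt_two).1 (hKθ.trans hn')
  exact mem_iUnion.2 ⟨n - K, by rw [Nat.sub_add_cancel hKn]; exact ⟨hθ, hn, hn'⟩⟩

theorem tsum_setOf_pow_lt_le (g : ℝ → ℝ≥0∞) (K : ℕ) :
    ∑' θ : {θ ∈ R | 2 ^ K < l θ}, g θ ≤ ∑' j, ∑' θ : dyadicShell R l (j + K), g θ :=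
  (ENNReal.tsum_mono_subtype g (setOf_pow_lt_subset_iUnion_dyadicShell K)).trans
    (ENNReal.tsum_iUnion_le_tsum g _)

theorem finite_dyadicShell (hfin : ∀ L > (0 : ℝ), {θ ∈ R | l θ < L}.Finite) (k : ℕ) :
    (dyadicShell R l k).Finite :=
  (hfin _ (by positivity)).subset (dyadicShell_subset k)

theorem countable_setOf_pow_lt (hfin : ∀ L > (0 : ℝ), {θ ∈ R | l θ < L}.Finite) (K : ℕ) :
    {θ ∈ R | 2 ^ K < l θ}.Countable :=
  (countable_iUnion fun j => (finite_dyadicShell hfin (j + K)).countable).mono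
    (setOf_pow_lt_subset_iUnion_dyadicShell K)

theorem encard_dyadicShell_le (hfin : ∀ L > (0 : ℝ), {θ ∈ R | l θ < L}.Finite) {M : ℝ}
    (hQG : ∀ Rad > (0 : ℝ), (({θ ∈ R | l θ < Rad}).ncard : ℝ) < M * Rad ^ 2) (k : ℕ) :
    ((dyadicShell R l k).encard : ℝ≥0∞) ≤ ENNReal.ofReal (M * (2 ^ (k + 1)) ^ 2) := by
  have hT := hfin (2 ^ (k + 1)) (by positivity)
  calc ((dyadicShell R l k).encard : ℝ≥0∞) ≤ ({θ ∈ R | l θ < 2 ^ (k + 1)}.encard : ℝ≥0∞) := by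
        gcongr; exact dyadicShell_subset k
    _ = ENNReal.ofReal ({θ ∈ R | l θ < 2 ^ (k + 1)}.ncard : ℝ) := by
        rw [← hT.cast_ncard_eq, ENNReal.ofReal_natCast]; rfl
    _ ≤ ENNReal.ofReal (M * (2 ^ (k + 1)) ^ 2) :=
        ENNReal.ofReal_le_ofReal (hQG _ (by positivity)).le

theorem tsum_dyadicShell_le (hfin : ∀ L > (0 : ℝ), {θ ∈ R | l θ < L}.Finite) {M : ℝ}
    (hQG : ∀ Rad > (0 : ℝ), (({θ ∈ R | l θ < Rad}).ncard : ℝ) < M * Rad ^ 2)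
    {g : ℝ → ℝ≥0∞} (hg : Antitone g) (k : ℕ) :
    ∑' θ : dyadicShell R l k, g (l θ) ≤ ENNReal.ofReal (M * (2 ^ (k + 1)) ^ 2) * g (2 ^ k) :=
  calc ∑' θ : dyadicShell R l k, g (l θ) ≤ ∑' _ : dyadicShell R l k, g (2 ^ k) :=
        ENNReal.tsum_le_tsum fun θ => hg θ.2.2.1
    _ = (dyadicShell R l k).encard * g (2 ^ k) := ENNReal.tsum_set_const _ _
    _ ≤ ENNReal.ofReal (M * (2 ^ (k + 1)) ^ 2) * g (2 ^ k) := by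
        gcongr; exact encard_dyadicShell_le hfin hQG k

end Shells

theorem stmt4_general (R : Set ℝ) (l : ℝ → ℝ)
    (hfin : ∀ L > (0 : ℝ), {θ ∈ R | l θ < L}.Finite) (M : ℝ)
    (hQG : ∀ Rad > (0 : ℝ), (({θ ∈ R | l θ < Rad}).ncard : ℝ) < M * Rad ^ 2)
    (ψ : ℝ → ℝ) (hψpos : ∀ t > (0 : ℝ), 0 < ψ t) (hψ : Antitone ψ)
    (f : ℝ → ℝ) (hfm : Monotone f) (hfpos : ∀ r > (0 : ℝ), 0 < f r)
    (hmono : AntitoneOn (fun t => t * f (ψ t)) (Set.Ioi 0))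
    (hconv : Summable fun n : ℕ => (n : ℝ) * f (ψ n)) :
    Measure.mkMetric (fun d => ENNReal.ofReal (f d.toReal))
      (⋂ L ∈ Set.Ioi (0 : ℝ), ⋃ θ ∈ {θ ∈ R | L < l θ}, Metric.ball θ (ψ (l θ))) = 0 := by
  set S : ℕ → Set ℝ := fun K => {θ ∈ R | 2 ^ K < l θ}
  set g : ℝ → ℝ≥0∞ := fun t => ENNReal.ofReal (f (ψ t))
  have hS : ∀ K, Countable (S K) := fun K => (countable_setOf_pow_lt hfin K).to_subtype
  have hg : Antitone g := fun _ _ hab => ENNReal.ofReal_le_ofReal (hfm (hψ hab))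
  have hu : ∀ t > (0 : ℝ), 0 ≤ f (ψ t) := fun t ht => (hfpos _ (hψpos t ht)).le
  have hcond := summable_condensed_of_antitoneOn hu hmono hconv
  have hψ_two_pow : Tendsto (fun K : ℕ => ψ (2 ^ K)) atTop (𝓝 0) :=
    Monotone.tendsto_zero_of_tendsto_comp_zero hfm hfpos (fun K => (hψpos _ (by positivity)).le)
      (tendsto_apply_two_pow_of_summable_condensed hu hcond)
  set c : ℕ → ℝ≥0∞ := fun k => ENNReal.ofReal (M * (2 ^ (k + 1)) ^ 2) * g (2 ^ k)
  have hsum : ∀ K, ∑' θ : S K, g (l θ) ≤ ∑' j, c (j + K) := fun K =>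
    (tsum_setOf_pow_lt_le (g ∘ l) K).trans
      (ENNReal.tsum_le_tsum fun j => tsum_dyadicShell_le hfin hQG hg (j + K))
  have htail := ENNReal.tendsto_sum_nat_add c
    (tsum_ofReal_mul_ofReal_ne_top_of_summable_condensed hu M hcond)
  refine nonpos_iff_eq_zero.1 ?_
  calc _ ≤ liminf (fun K => 2 * ∑' θ : S K, g (l θ)) atTop :=
        Measure.mkMetric_le_liminf_two_mul_tsum_ball f
          (⋂ L ∈ Set.Ioi (0 : ℝ), ⋃ θ ∈ {θ ∈ R | L < l θ}, Metric.ball θ (ψ (l θ))) S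
          (fun θ => ψ (l θ)) (fun K => ENNReal.ofReal (ψ (2 ^ K)))
          (by simpa using ENNReal.tendsto_ofReal hψ_two_pow)
          (fun K θ hθ => (hψpos _ ((pow_pos two_pos K).trans hθ.2)).le)
          (fun K θ hθ => ENNReal.ofReal_le_ofReal (hψ hθ.2.le))
          fun K x hx => mem_iInter₂.1 hx _ (mem_Ioi.2 (by positivity))
    _ ≤ liminf (fun K => 2 * ∑' j, c (j + K)) atTop :=
        liminf_le_liminf (Eventually.of_forall fun K => mul_le_mul_right (hsum K) 2)
    _ = 0 := by
        simpa using (ENNReal.Tendsto.const_mul htail (Or.inr ENNReal.ofNat_ne_top)).liminf_eq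

theorem stmt4 (R : Set ℝ) (hRc : R.Countable)
    (hRsub : R ⊆ Set.Ico (-(π / 2)) (π / 2))
    (l : ℝ → ℝ) (hlpos : ∀ θ ∈ R, 0 < l θ)
    (hfin : ∀ L > (0 : ℝ), {θ ∈ R | l θ < L}.Finite)
    (M : ℝ) (hM : 0 < M)
    (hQG : ∀ Rad > (0 : ℝ), (({θ ∈ R | l θ < Rad}).ncard : ℝ) < M * Rad ^ 2)
    (ψ : ℝ → ℝ) (hψpos : ∀ t > (0 : ℝ), 0 < ψ t) (hψ : Antitone ψ)
    (f : ℝ → ℝ) (hfc : Continuous f) (hfm : Monotone f) (hfpos : ∀ r > (0 : ℝ), 0 < f r)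
    (hmono : AntitoneOn (fun t => t * f (ψ t)) (Set.Ioi 0))
    (hconv : Summable fun n : ℕ => (n : ℝ) * f (ψ n)) :
    Measure.mkMetric (fun d => ENNReal.ofReal (f d.toReal))
      (⋂ L ∈ Set.Ioi (0 : ℝ), ⋃ θ ∈ {θ ∈ R | L < l θ}, Metric.ball θ (ψ (l θ))) = 0 :=
  stmt4_general R l hfin M hQG ψ hψpos hψ f hfm hfpos hmono hconv
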